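/- arXiv:2209.00401 — 3 statements merged into one kernel-verified Lean document; each statement's English description precedes it below -/
import Mathlib

section
/- Continuous-time Halanay inequality: let a > b > 0 and τ > 0, and let x : [t₀ − τ, ∞) → [0,∞) be continuous and satisfy the upper right Dini derivative estimate D⁺x(t) ≤ −a·x(t) + b·sup_{s∈[t−τ,t]} x(s) for all t ≥ t₀. Then for any λ > 0 satisfying λ + b·exp(λτ) ≤ a, one has x(t) ≤ (sup_{s∈[t₀−τ,t₀]} x(s))·exp(−λ(t − t₀)) for all t ≥ t₀. -/
/-!
Fix `0 ≤ μ < λ` and `K > 0` bounding `x` on the initial interval. The envelope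
`w(t) = K e^{-μ(t - t₀)}` satisfies `w' = -μ w > (-a + b e^{μτ}) w`. As long as `x ≤ w` on
`[t₀, t]`, the delayed supremum at `t` is at most `w(t - τ) = e^{μτ} w(t)`, so at a point where
`x` touches `w` the Dini estimate gives `D⁺x(t) < w'(t)` and `x` stays strictly below `w` just
to the right. Real induction then yields `x ≤ w` on `[t₀, ∞)`; letting `μ → λ` and
`K → sup_{[t₀-τ, t₀]} x` gives the theorem.
-/

open Filter Topology Set Real

noncomputable def upperRightDini (x : ℝ → ℝ) (t : ℝ) : ℝ :=
  limsup (fun h : ℝ => (x (t + h) - x t) / h) (𝓝[>] 0)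

theorem Real.eventually_lt_of_limsup_lt_of_nonpos {α : Type*} {F : Filter α} {u : α → ℝ} {c : ℝ}
    (h : limsup u F < c) (hc : c ≤ 0) : ∀ᶠ y in F, u y < c := by
  -- an `ℝ`-valued `limsup` of a function unbounded above is `0`
  by_cases hu : F.IsBoundedUnder (· ≤ ·) u
  · exact Filter.eventually_lt_of_limsup_lt h hu
  · rw [Real.limsup_of_not_isBoundedUnder hu] at h
    exact absurd hc h.not_ge

theorem eventually_lt_nhdsGT_of_upperRightDini_lt {x w : ℝ → ℝ} {t w' : ℝ}
    (hw : HasDerivAt w w' t) (hxw : x t = w t) (hlt : upperRightDini x t < w') (hw' : w' ≤ 0) :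
    ∀ᶠ z in 𝓝[>] t, x z < w z := by
  obtain ⟨c, hDc, hcw⟩ := exists_between hlt
  have hx : ∀ᶠ h in 𝓝[>] (0 : ℝ), (x (t + h) - x t) / h < c :=
    Real.eventually_lt_of_limsup_lt_of_nonpos hDc (hcw.le.trans hw')
  have hw : ∀ᶠ h in 𝓝[>] (0 : ℝ), c < (w (t + h) - w t) / h := by
    refine hw.tendsto_slope_zero_right.eventually (eventually_gt_nhds hcw) |>.mono fun h hh => ?_
    rwa [smul_eq_mul, inv_mul_eq_div] at hh
  have hmap : map (t + ·) (𝓝[>] (0 : ℝ)) = 𝓝[>] t := by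
    rw [map_add_left_nhdsGT, add_zero]
  rw [← hmap, eventually_map]
  filter_upwards [hx, hw, self_mem_nhdsWithin] with h hxh hwh (hh : 0 < h)
  have := (div_lt_div_iff_of_pos_right hh).1 (hxh.trans hwh)
  linarith

theorem le_on_Icc_of_eventually_le_nhdsGT {f g : ℝ → ℝ} {a b : ℝ}
    (hf : ContinuousOn f (Icc a b)) (hg : ContinuousOn g (Icc a b)) (ha : f a ≤ g a)
    (step : ∀ t ∈ Ico a b, (∀ u ∈ Icc a t, f u ≤ g u) → f t = g t →
      ∀ᶠ z in 𝓝[>] t, f z ≤ g z) :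
    ∀ t ∈ Icc a b, f t ≤ g t := by
  set s := {t | ∀ u ∈ Icc a t, f u ≤ g u}
  have hC : IsClosed {u ∈ Icc a b | f u ≤ g u} := isClosed_Icc.isClosed_le hf hg
  have hs : IsClosed (s ∩ Icc a b) := by
    refine isClosed_of_closure_subset fun t ht =>
      ⟨fun u hu => ?_, isClosed_Icc.closure_subset (closure_mono inter_subset_right ht)⟩
    rcases hu.2.lt_or_eq with hut | rfl
    · obtain ⟨v, huv, hv, -⟩ := mem_closure_iff.1 ht (Ioi u) isOpen_Ioi hut
      exact hv u ⟨hu.1, le_of_lt huv⟩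
    · have hsC : s ∩ Icc a b ⊆ {u ∈ Icc a b | f u ≤ g u} := fun v hv =>
        ⟨hv.2, hv.1 v ⟨hv.2.1, le_rfl⟩⟩
      exact (hC.closure_subset (closure_mono hsC ht)).2
  have hgt : ∀ t ∈ s ∩ Ico a b, s ∈ 𝓝[>] t := by
    rintro t ⟨hts, htab⟩
    have hev : ∀ᶠ z in 𝓝[>] t, f z ≤ g z := by
      rcases (hts t ⟨htab.1, le_rfl⟩).lt_or_eq with hlt | heq
      · have hcont := (hf.sub hg) t (Ico_subset_Icc_self htab)
        have := hcont.eventually (gt_mem_nhds (sub_neg.2 hlt))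
        exact (this.filter_mono (nhdsWithin_le_of_mem (Icc_mem_nhdsGT_of_mem htab))).mono
          fun z hz => (sub_neg.1 hz).le
      · exact step t htab hts heq
    obtain ⟨c, hc, hsub⟩ := mem_nhdsGT_iff_exists_Ioo_subset.1 hev
    filter_upwards [Ioo_mem_nhdsGT hc] with z hz u hu
    rcases le_or_gt u t with hut | htu
    · exact hts u ⟨hu.1, hut⟩
    · exact hsub ⟨htu, hu.2.trans_lt hz.2⟩
  have hsub :=
    hs.Icc_subset_of_forall_mem_nhdsWithin (fun u hu => by rwa [le_antisymm hu.2 hu.1]) hgt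
  exact fun t ht => hsub ht t ⟨ht.1, le_rfl⟩

theorem halanay_le_exp_envelope {a b τ t₀ μ K : ℝ} {x : ℝ → ℝ} (hb : 0 ≤ b) (hτ : 0 ≤ τ)
    (hx : ContinuousOn x (Ici t₀))
    (hdini : ∀ t, t₀ ≤ t → upperRightDini x t ≤ -a * x t + b * sSup (x '' Icc (t - τ) t))
    (hμ : 0 ≤ μ) (hμa : μ + b * exp (μ * τ) < a) (hK : 0 < K)
    (hinit : ∀ u ∈ Icc (t₀ - τ) t₀, x u ≤ K) :
    ∀ t, t₀ ≤ t → x t ≤ K * exp (-μ * (t - t₀)) := by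
  set w : ℝ → ℝ := fun u => K * exp (-μ * (u - t₀))
  have hw_pos : ∀ u, 0 < w u := fun u => by positivity
  have hw_anti : Antitone w := fun u v huv => by
    dsimp only [w]
    gcongr K * exp ?_
    nlinarith
  have hw_shift : ∀ t, w (t - τ) = exp (μ * τ) * w t := fun t => by
    simp only [w, mul_left_comm _ K, ← exp_add]
    ring_nf
  have hw_deriv : ∀ t, HasDerivAt w (-μ * w t) t := fun t => by
    have := (((hasDerivAt_id' t).sub_const t₀).const_mul (-μ)).exp.const_mul K
    exact this.congr_deriv (by simp only [w]; ring)
  intro t₁ ht₁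
  refine le_on_Icc_of_eventually_le_nhdsGT (hx.mono Icc_subset_Ici_self)
    (fun u _ => (hw_deriv u).continuousAt.continuousWithinAt) ?_ ?_ t₁ ⟨ht₁, le_rfl⟩
  · simpa [w] using hinit t₀ ⟨by linarith, le_rfl⟩
  intro t ht hhist heq
  have hdelay : ∀ u ∈ Icc (t - τ) t, x u ≤ w u := by
    intro u hu
    rcases le_total u t₀ with hut₀ | ht₀u
    · refine (hinit u ⟨by linarith [hu.1, ht.1], hut₀⟩).trans ?_
      exact (le_of_eq (by simp [w])).trans (hw_anti hut₀)
    · exact hhist u ⟨ht₀u, hu.2⟩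
  have hsup : sSup (x '' Icc (t - τ) t) ≤ exp (μ * τ) * w t := by
    rw [← hw_shift]
    refine Real.sSup_le ?_ (hw_pos _).le
    rintro _ ⟨u, hu, rfl⟩
    exact (hdelay u hu).trans (hw_anti hu.1)
  have hslope : upperRightDini x t < -μ * w t := calc
    upperRightDini x t ≤ -a * x t + b * sSup (x '' Icc (t - τ) t) := hdini t ht.1
    _ ≤ (-a + b * exp (μ * τ)) * w t := by rw [heq]; nlinarith
    _ < -μ * w t := mul_lt_mul_of_pos_right (by linarith) (hw_pos t)
  exact (eventually_lt_nhdsGT_of_upperRightDini_lt (hw_deriv t) heq hslope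
    (by nlinarith [hw_pos t])).mono fun _ => le_of_lt

theorem halanay_continuous_general (a b τ t₀ : ℝ) (x : ℝ → ℝ)
    (hb : 0 < b) (hτ : 0 < τ)
    (hx_nonneg : ∀ t, t₀ - τ ≤ t → 0 ≤ x t)
    (hx_cont : ContinuousOn x (Set.Ici (t₀ - τ)))
    (hdini : ∀ t, t₀ ≤ t →
      limsup (fun h : ℝ => (x (t + h) - x t) / h) (nhdsWithin 0 (Set.Ioi 0))
        ≤ -a * x t + b * sSup (x '' Set.Icc (t - τ) t))
    (lam : ℝ) (hlam : 0 < lam) (hlam_ineq : lam + b * Real.exp (lam * τ) ≤ a) :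
    ∀ t, t₀ ≤ t →
      x t ≤ sSup (x '' Set.Icc (t₀ - τ) t₀) * Real.exp (-lam * (t - t₀)) := by
  intro t ht
  set M := sSup (x '' Icc (t₀ - τ) t₀)
  have hM : 0 ≤ M := Real.sSup_nonneg <| by
    rintro _ ⟨u, hu, rfl⟩
    exact hx_nonneg u hu.1
  have hinit : ∀ u ∈ Icc (t₀ - τ) t₀, x u ≤ M := fun u hu =>
    le_csSup (isCompact_Icc.image_of_continuousOn (hx_cont.mono Icc_subset_Ici_self)).bddAbove
      (mem_image_of_mem x hu)
  have henv : ∀ μ ∈ Ico 0 lam, x t ≤ (M + (lam - μ)) * exp (-μ * (t - t₀)) := by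
    rintro μ ⟨hμ, hμlam⟩
    have hrate : μ + b * exp (μ * τ) < a := by
      have : exp (μ * τ) ≤ exp (lam * τ) := by gcongr
      nlinarith
    exact halanay_le_exp_envelope hb.le hτ.le (hx_cont.mono (Ici_subset_Ici.2 (by linarith)))
      hdini hμ hrate (by linarith) (fun u hu => (hinit u hu).trans (by linarith)) t ht
  have hlim : Tendsto (fun μ => (M + (lam - μ)) * exp (-μ * (t - t₀))) (𝓝[<] lam)
      (𝓝 (M * exp (-lam * (t - t₀)))) := by
    have : Continuous fun μ => (M + (lam - μ)) * exp (-μ * (t - t₀)) := by fun_prop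
    simpa using (this.tendsto lam).mono_left nhdsWithin_le_nhds
  refine ge_of_tendsto hlim ?_
  filter_upwards [Ioo_mem_nhdsLT hlam] with μ hμ using henv μ (Ioo_subset_Ico_self hμ)

/-- Continuous-time Halanay inequality: if `a > b > 0`, `τ > 0`, `x ≥ 0` is
continuous on `[t₀ − τ, ∞)` and its upper right Dini derivative satisfies
`D⁺x(t) ≤ −a·x(t) + b·sup_{s∈[t−τ,t]} x(s)` for all `t ≥ t₀`, then for any
`λ > 0` with `λ + b·exp(λτ) ≤ a` one has
`x(t) ≤ (sup_{s∈[t₀−τ,t₀]} x(s))·exp(−λ(t−t₀))` for all `t ≥ t₀`. -/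
theorem halanay_continuous (a b τ t₀ : ℝ) (x : ℝ → ℝ)
    (hab : b < a) (hb : 0 < b) (hτ : 0 < τ)
    (hx_nonneg : ∀ t, t₀ - τ ≤ t → 0 ≤ x t)
    (hx_cont : ContinuousOn x (Set.Ici (t₀ - τ)))
    (hdini : ∀ t, t₀ ≤ t →
      limsup (fun h : ℝ => (x (t + h) - x t) / h) (nhdsWithin 0 (Set.Ioi 0))
        ≤ -a * x t + b * sSup (x '' Set.Icc (t - τ) t))
    (lam : ℝ) (hlam : 0 < lam) (hlam_ineq : lam + b * Real.exp (lam * τ) ≤ a) :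
    ∀ t, t₀ ≤ t →
      x t ≤ sSup (x '' Set.Icc (t₀ - τ) t₀) * Real.exp (-lam * (t - t₀)) :=
  halanay_continuous_general a b τ t₀ x hb hτ hx_nonneg hx_cont hdini lam hlam hlam_ineq
end

section
/- Discrete-time Halanay inequality: let h > 0, let a > b > 0 with 1 − h·a > 0 (hence −a is positively regressive on hℤ), τ = mh for some m ∈ ℕ, and let x : {t₀ − mh, …} → [0,∞) satisfy (x(t+h) − x(t))/h ≤ −a·x(t) + b·max_{k=0,…,m} x(t − kh) for all t = t₀ + jh, j ≥ 0. Then for any λ > 0 with λ + b·exp(λτ) ≤ a and 1 + hλ > 0, one has x(t) ≤ (max_{k=0,…,m} x(t₀ − kh))·(1 + hλ)^{−(t − t₀)/h} for all t ≥ t₀ in t₀ + hℕ. -/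
/-- Discrete-time Halanay inequality on the time scale `hℤ` (time `t = t₀ + jh`,
value `x j`): if `a > b > 0`, `1 − h·a > 0` (positive regressivity of `−a`),
`τ = mh`, `x ≥ 0`, and `(x(j+1) − x(j))/h ≤ −a·x(j) + b·max_{0≤k≤m} x(j−k)` for
all `j ≥ 0`, then for any `λ > 0` with `λ + b·exp(λτ) ≤ a` and `1 + hλ > 0`,
one has `x(j) ≤ (max_{0≤k≤m} x(−k))·(1 + hλ)^{−j}` for all `j ≥ 0`. -/
theorem halanay_discrete (h a b τ : ℝ) (m : ℕ) (x : ℤ → ℝ)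
    (hh : 0 < h) (hab : b < a) (hb : 0 < b) (hreg : 0 < 1 - h * a)
    (hτ : τ = m * h)
    (hx_nonneg : ∀ j : ℤ, -(m : ℤ) ≤ j → 0 ≤ x j)
    (hrec : ∀ j : ℤ, 0 ≤ j →
      (x (j + 1) - x j) / h ≤ -a * x j + b * ⨆ k : Fin (m + 1), x (j - (k : ℕ)))
    (lam : ℝ) (hlam : 0 < lam) (hlam_ineq : lam + b * Real.exp (lam * τ) ≤ a)
    (hlam_reg : 0 < 1 + h * lam) :
    ∀ j : ℤ, 0 ≤ j →
      x j ≤ (⨆ k : Fin (m + 1), x (-(k : ℕ))) * (1 + h * lam) ^ (-j) := by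
  set u : ℝ := 1 + h * lam with hu
  have hu1 : 1 < u := by simp only [hu]; nlinarith
  have hu0 : (0:ℝ) < u := hlam_reg
  set M : ℝ := ⨆ k : Fin (m + 1), x (-(k : ℕ)) with hM
  have hbdd : ∀ (y : Fin (m+1) → ℝ), BddAbove (Set.range y) :=
    fun y => Set.Finite.bddAbove (Set.finite_range y)
  have hM0 : 0 ≤ M := by
    have h1 : x (-(((0 : Fin (m+1)) : ℕ) : ℤ)) ≤ M :=
      le_ciSup (f := fun k : Fin (m+1) => x (-(k:ℕ))) (hbdd _) (0 : Fin (m+1))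
    have h2 : (0:ℝ) ≤ x 0 := hx_nonneg 0 (by omega)
    simpa using le_trans h2 h1
  have hbase : ∀ i : ℤ, -(m:ℤ) ≤ i → i ≤ 0 → x i ≤ M * u ^ (-i) := by
    intro i h1 h2
    have hk : ((-i).toNat : ℤ) = -i := Int.toNat_of_nonneg (by omega)
    have hklt : (-i).toNat < m + 1 := by omega
    have hxM : x i ≤ M := by
      have := le_ciSup (f := fun k : Fin (m+1) => x (-(k:ℕ))) (hbdd _)
        (⟨(-i).toNat, hklt⟩ : Fin (m+1))
      simpa [hk] using this
    have hpow : (1:ℝ) ≤ u ^ (-i) := one_le_zpow₀ hu1.le (by omega)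
    nlinarith
  have main : ∀ j : ℤ, 0 ≤ j → ∀ i : ℤ, -(m:ℤ) ≤ i → i ≤ j → x i ≤ M * u ^ (-i) := by
    refine Int.le_induction (fun i h1 h2 => hbase i h1 h2) ?_
    intro j hj IH i h1 h2
    rcases lt_or_eq_of_le h2 with h2 | h2
    · exact IH i h1 (by omega)
    · subst h2
      have hr := hrec j hj
      have hxj1 : x (j + 1) ≤ (1 - h * a) * x j + h * b * ⨆ k : Fin (m+1), x (j - (k:ℕ)) := by
        rw [div_le_iff₀ hh] at hr
        nlinarith
      have hS : (⨆ k : Fin (m+1), x (j - (k:ℕ))) ≤ M * u ^ ((m:ℤ) - j) := by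
        apply ciSup_le
        intro k
        have hk : (k:ℤ) ≤ m := by exact_mod_cast Nat.lt_succ_iff.mp k.isLt
        have := IH (j - (k:ℕ)) (by omega) (by omega)
        refine this.trans ?_
        have hz : u ^ (-(j - ((k:ℕ):ℤ))) ≤ u ^ ((m:ℤ) - j) :=
          zpow_le_zpow_right₀ hu1.le (by omega)
        nlinarith
      have hxj : x j ≤ M * u ^ (-j) := IH j (by omega) le_rfl
      have hc : u ^ m ≤ Real.exp (lam * τ) := by
        have h1 : u ≤ Real.exp (h * lam) := by
          have := Real.add_one_le_exp (h * lam); simp only [hu]; linarith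
        calc u ^ m ≤ (Real.exp (h * lam)) ^ m := pow_le_pow_left₀ hu0.le h1 m
          _ = Real.exp (lam * τ) := by
              rw [← Real.exp_nat_mul, hτ]; ring_nf
      have hsplit : u ^ ((m:ℤ) - j) = u ^ (m:ℕ) * u ^ (-j) := by
        rw [sub_eq_add_neg, zpow_add₀ (ne_of_gt hu0), zpow_natCast]
      have hzj : (0:ℝ) < u ^ (-j) := zpow_pos hu0 _
      have key : (1 - h * a) + h * b * u ^ m ≤ 1 - h * lam := by
        have e1 : h * b * u ^ m ≤ h * b * Real.exp (lam * τ) :=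
          mul_le_mul_of_nonneg_left hc (by positivity)
        have e2 : h * (lam + b * Real.exp (lam * τ)) ≤ h * a :=
          mul_le_mul_of_nonneg_left hlam_ineq hh.le
        nlinarith
      have hinv : u ^ (-(j+1)) = u ^ (-j) / u := by
        rw [neg_add, zpow_add₀ (ne_of_gt hu0)]
        simp [zpow_neg]
        ring
      rw [hinv, ← mul_div_assoc, le_div_iff₀ hu0]
      have h3 : x (j+1) ≤ (1 - h*a) * (M * u ^ (-j)) + h * b * (M * u^m * u^(-j)) := by
        calc x (j+1) ≤ (1 - h * a) * x j + h * b * ⨆ k : Fin (m+1), x (j - (k:ℕ)) := hxj1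
          _ ≤ (1 - h*a) * (M * u ^ (-j)) + h * b * (M * u^m * u^(-j)) := by
              have hS' := hS
              rw [hsplit] at hS'
              have e1 := mul_le_mul_of_nonneg_left hxj hreg.le
              have e2 := mul_le_mul_of_nonneg_left hS'
                (mul_nonneg hh.le hb.le)
              nlinarith
      have hMu : 0 ≤ M * u ^ (-j) := mul_nonneg hM0 hzj.le
      nlinarith [mul_nonneg hMu (mul_nonneg hh.le hlam.le),
        mul_le_mul_of_nonneg_right key hMu]
  intro j hj
  exact main j hj j (by omega) le_rfl
end

section
/- Continuous-time exponential lag synchronization (simplified linear case): consider the drive system x'(t) = −A x(t) + P F(x(t)) + Q F(x(t−τ₁)) + R ∫_{t−τ₂}^t F(x(s)) ds + I₀ and the response system y'(t) with the same right-hand side plus the control u(t) = −K(y(t) − x(t−β)). Suppose F is L_F-Lipschitz, A + K is a matrix with −Λ_p(−(A+K)) − ‖P‖_p L_F > L_F(‖Q‖_p + τ‖R‖_p) > 0, where τ = max(τ₁, τ₂). Then there exist C > 0 and λ > 0 such that ‖y(t) − x(t − β)‖_p ≤ C e^{−λ(t − t₀)} for all t ≥ t₀. -/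
open Filter Topology Set Real

/-!
The lag error `e t = y t - x (t - β)` solves the delay equation
`e' = -(A + K) e + P F̂(e) + Q F̂(e(t - τ₁)) + R ∫_{t-τ₂}^t F̂(e)`. The expansion
`e(t + h) = (1 - h (A + K)) e(t) + h r + o(h)` bounds the upper right Dini derivative of `‖e‖`
by `Λ ‖e t‖ + ‖r‖`, and the Lipschitz bound on `F` turns this into Halanay's differential
inequality `D⁺‖e‖(t) ≤ -a ‖e t‖ + b sup_{[t-τ,t]} ‖e‖` with
`a = -Λ - ‖P‖ L_F > b = L_F (‖Q‖ + τ‖R‖)`.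
Pick `λ > 0` with `b e^{λτ} + λ < a`; then `‖e‖` stays below the barrier `C e^{-λ(t-T)}`
by continuous induction: at a point where `‖e‖` touches the barrier after staying below it,
the history is at most `e^{λτ}` times the current value, so `D⁺‖e‖` is strictly smaller than
the slope of the barrier.
-/

/-- `D⁺f(x) ≤ κ` for the upper right Dini derivative `D⁺f(x) = limsup_{z → x⁺} slope f x z`. -/
def UpperRightDiniLE (f : ℝ → ℝ) (x κ : ℝ) : Prop :=
  ∀ c > κ, ∀ᶠ z in 𝓝[>] x, slope f x z < c

theorem UpperRightDiniLE.mono {f : ℝ → ℝ} {x κ κ' : ℝ} (h : UpperRightDiniLE f x κ)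
    (hκ : κ ≤ κ') : UpperRightDiniLE f x κ' :=
  fun c hc => h c (hκ.trans_lt hc)

theorem UpperRightDiniLE.eventually_lt {f g : ℝ → ℝ} {u κ g' : ℝ}
    (hf : UpperRightDiniLE f u κ) (hg : HasDerivAt g g' u) (hκ : κ < g') (hu : f u ≤ g u) :
    ∀ᶠ z in 𝓝[>] u, f z < g z := by
  obtain ⟨c, hκc, hcg⟩ := exists_between hκ
  have hg_slope : ∀ᶠ z in 𝓝[>] u, c < slope g u z :=
    ((hasDerivAt_iff_tendsto_slope.mp hg).mono_left (nhdsGT_le_nhdsNE u)).eventually_const_lt hcg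
  filter_upwards [hf c hκc, hg_slope, self_mem_nhdsWithin] with z hfz hgz hz
  have hzu : 0 < z - u := sub_pos.mpr hz
  rw [slope_def_field, div_lt_iff₀ hzu] at hfz
  rw [slope_def_field, lt_div_iff₀ hzu] at hgz
  linarith

theorem exists_pos_mul_exp_add_lt {a b τ : ℝ} (h : b < a) :
    ∃ lam > 0, b * exp (lam * τ) + lam < a := by
  have hcont : Tendsto (fun l : ℝ => b * exp (l * τ) + l) (𝓝[>] 0) (𝓝 b) := by
    simpa using ((by fun_prop : Continuous fun l : ℝ => b * exp (l * τ) + l).tendsto 0).mono_left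
      nhdsWithin_le_nhds
  obtain ⟨lam, hlam, hpos⟩ := ((hcont.eventually_lt_const h).and self_mem_nhdsWithin).exists
  exact ⟨lam, hpos, hlam⟩

theorem halanay_inequality {f : ℝ → ℝ} (hf : Continuous f) {T τ a b C : ℝ} (hτ : 0 ≤ τ)
    (hab : b < a) (hC : 0 < C)
    (hdini : ∀ u ≥ T, ∀ M, (∀ s ∈ Icc (u - τ) u, f s ≤ M) →
      UpperRightDiniLE f u (-a * f u + b * M))
    (hhist : ∀ s ∈ Icc (T - τ) T, f s ≤ C) :
    ∃ lam > 0, ∀ t ≥ T, f t ≤ C * exp (-lam * (t - T)) := by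
  obtain ⟨lam, hlam0, hlam⟩ := exists_pos_mul_exp_add_lt (τ := τ) hab
  set g : ℝ → ℝ := fun t => C * exp (-lam * (t - T)) with hg_def
  have hg_cont : Continuous g := by fun_prop
  have hg_pos : ∀ s, 0 < g s := fun s => by positivity
  have hg_deriv : ∀ u, HasDerivAt g (-lam * g u) u := fun u =>
    ((((hasDerivAt_id u).sub_const T).const_mul (-lam)).exp.const_mul C).congr_deriv
      (by simp only [hg_def, id]; ring)
  have hC_le_g : ∀ s ≤ T, C ≤ g s := fun s hs =>
    le_mul_of_one_le_right hC.le (one_le_exp (by nlinarith))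
  have hg_window : ∀ u, ∀ s ∈ Icc (u - τ) u, g s ≤ exp (lam * τ) * g u := by
    intro u s hs
    simp only [hg_def, mul_left_comm _ C, ← exp_add]
    gcongr
    nlinarith [hs.1]
  refine ⟨lam, hlam0, fun t ht => ?_⟩
  have hT : f T ≤ g T := (hhist T ⟨by linarith, le_rfl⟩).trans (hC_le_g T le_rfl)
  refine ((isClosed_le hf hg_cont).inter isClosed_Icc).Icc_subset_of_forall_mem_nhdsGT_of_Icc_subset
    hT (fun u hu hfg => ?_) ⟨ht, le_rfl⟩
  have hwin : ∀ s ∈ Icc (u - τ) u, f s ≤ exp (lam * τ) * g u := by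
    refine fun s hs => le_trans ?_ (hg_window u s hs)
    rcases lt_or_ge s T with hsT | hsT
    · exact (hhist s ⟨by linarith [hs.1, hu.1], hsT.le⟩).trans (hC_le_g s hsT.le)
    · exact hfg ⟨hsT, hs.2⟩
  rcases (show f u ≤ g u from hfg ⟨hu.1, le_rfl⟩).lt_or_eq with hlt | heq
  · exact mem_nhdsWithin_of_mem_nhds <| mem_of_superset ((isOpen_lt hf hg_cont).mem_nhds hlt)
      fun z (h : f z < g z) => show f z ≤ g z from h.le
  · have hκ : -a * f u + b * (exp (lam * τ) * g u) < -lam * g u := by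
      rw [heq]
      nlinarith [hg_pos u]
    exact ((hdini u hu.1 _ hwin).eventually_lt (hg_deriv u) hκ heq.le).mono fun _ => le_of_lt

theorem upperRightDiniLE_norm_of_hasDerivAt {E : Type*} [NormedAddCommGroup E]
    [NormedSpace ℝ E] {e : ℝ → E} {B : E →L[ℝ] E} {r : E} {u Λ : ℝ}
    (he : HasDerivAt e (B (e u) + r) u)
    (hΛ : Tendsto (fun s : ℝ => (‖(1 : E →L[ℝ] E) + s • B‖ - 1) / s) (𝓝[>] 0) (𝓝 Λ)) :
    UpperRightDiniLE (fun t => ‖e t‖) u (Λ * ‖e u‖ + ‖r‖) := by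
  set D := B (e u) + r
  set φ : ℝ → ℝ := fun z => (‖(1 : E →L[ℝ] E) + (z - u) • B‖ - 1) / (z - u) * ‖e u‖
      + ‖e z - e u - (z - u) • D‖ / (z - u) + ‖r‖ with hφ_def
  have hshift : Tendsto (fun z : ℝ => z - u) (𝓝[>] u) (𝓝[>] 0) :=
    tendsto_nhdsWithin_of_tendsto_nhds_of_eventually_within _
      (by simpa using ((continuous_sub_right u).tendsto u).mono_left nhdsWithin_le_nhds)
      (eventually_nhdsWithin_of_forall fun _ hz => mem_Ioi.mpr (sub_pos.mpr hz))
  have hrem : Tendsto (fun z => ‖e z - e u - (z - u) • D‖ / (z - u)) (𝓝[>] u) (𝓝 0) := by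
    refine ((hasDerivAt_iff_isLittleO.mp he).norm_norm.tendsto_div_nhds_zero.mono_left
      nhdsWithin_le_nhds).congr' ?_
    filter_upwards [self_mem_nhdsWithin] with z hz
    rw [Real.norm_eq_abs, abs_of_pos (sub_pos.mpr hz)]
  have hφ : Tendsto φ (𝓝[>] u) (𝓝 (Λ * ‖e u‖ + ‖r‖)) := by
    simpa using (((hΛ.comp hshift).mul_const ‖e u‖).add hrem).add_const ‖r‖
  have hslope : ∀ z > u, slope (fun t => ‖e t‖) u z ≤ φ z := by
    intro z hz
    have hzu : 0 < z - u := sub_pos.mpr hz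
    have hsplit : e z = (e z - e u - (z - u) • D)
        + (((1 : E →L[ℝ] E) + (z - u) • B) (e u) + (z - u) • r) := by
      simp only [D, add_apply, smul_apply, one_apply_eq_self, smul_add]
      abel
    have hnorm : ‖e z‖ ≤ ‖e z - e u - (z - u) • D‖
        + ‖(1 : E →L[ℝ] E) + (z - u) • B‖ * ‖e u‖ + (z - u) * ‖r‖ := by
      calc ‖e z‖ ≤ ‖e z - e u - (z - u) • D‖
            + (‖((1 : E →L[ℝ] E) + (z - u) • B) (e u)‖ + ‖(z - u) • r‖) := by
            nth_rewrite 1 [hsplit]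
            exact (norm_add_le _ _).trans (by gcongr; exact norm_add_le _ _)
        _ ≤ _ := by
            rw [norm_smul, Real.norm_eq_abs, abs_of_pos hzu]
            linarith [((1 : E →L[ℝ] E) + (z - u) • B).le_opNorm (e u)]
    rw [slope_def_field, div_le_iff₀ hzu]
    have hφz : φ z * (z - u) = (‖(1 : E →L[ℝ] E) + (z - u) • B‖ - 1) * ‖e u‖
        + ‖e z - e u - (z - u) • D‖ + ‖r‖ * (z - u) := by
      simp only [hφ_def]
      field_simp
    linarith
  intro c hc
  filter_upwards [hφ.eventually_lt_const hc, self_mem_nhdsWithin] with z hφz hz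
  exact (hslope z hz).trans_lt hφz

theorem norm_delay_terms_le {E : Type*} [NormedAddCommGroup E] [NormedSpace ℝ E]
    (P Q R : E →L[ℝ] E) {G : ℝ → E} {τ₁ τ₂ u N : ℝ} (hτ₁ : 0 ≤ τ₁) (hτ₂ : 0 ≤ τ₂)
    (hG : ∀ s ∈ Icc (u - max τ₁ τ₂) u, ‖G s‖ ≤ N) :
    ‖P (G u) + Q (G (u - τ₁)) + R (∫ s in (u - τ₂)..u, G s)‖
      ≤ ‖P‖ * ‖G u‖ + (‖Q‖ + max τ₁ τ₂ * ‖R‖) * N := by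
  have hτ : 0 ≤ max τ₁ τ₂ := hτ₁.trans (le_max_left _ _)
  have hN : 0 ≤ N := (norm_nonneg _).trans (hG u ⟨by linarith, le_rfl⟩)
  have hdelay : ‖G (u - τ₁)‖ ≤ N := hG _ ⟨by linarith [le_max_left τ₁ τ₂], by linarith⟩
  have hint : ‖∫ s in (u - τ₂)..u, G s‖ ≤ max τ₁ τ₂ * N := by
    refine (intervalIntegral.norm_integral_le_of_norm_le_const (C := N) fun s hs => ?_).trans ?_
    · rw [uIoc_of_le (by linarith)] at hs
      exact hG s ⟨by linarith [hs.1, le_max_right τ₁ τ₂], hs.2⟩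
    · rw [sub_sub_cancel, abs_of_nonneg hτ₂, mul_comm]
      gcongr
      exact le_max_right _ _
  calc _ ≤ ‖P (G u)‖ + ‖Q (G (u - τ₁))‖ + ‖R (∫ s in (u - τ₂)..u, G s)‖ := norm_add₃_le
    _ ≤ ‖P‖ * ‖G u‖ + ‖Q‖ * ‖G (u - τ₁)‖ + ‖R‖ * ‖∫ s in (u - τ₂)..u, G s‖ := by
      gcongr <;> exact ContinuousLinearMap.le_opNorm _ _
    _ ≤ ‖P‖ * ‖G u‖ + ‖Q‖ * N + ‖R‖ * (max τ₁ τ₂ * N) := by gcongr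
    _ = _ := by ring

section LagSynchronization

variable {E : Type*} [NormedAddCommGroup E] [NormedSpace ℝ E]
  {A P Q R K : E →L[ℝ] E} {I₀ : E} {F : E → E} {τ₁ τ₂ β t₀ : ℝ} {x y : ℝ → E}

theorem hasDerivAt_lag_error (hF : Continuous F) (hx : Continuous x) (hy : Continuous y)
    (hx_ode : ∀ t, t₀ ≤ t → HasDerivAt x
      (-(A (x t)) + P (F (x t)) + Q (F (x (t - τ₁)))
        + R (∫ s in (t - τ₂)..t, F (x s)) + I₀) t)
    (hy_ode : ∀ t, t₀ ≤ t → HasDerivAt y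
      (-(A (y t)) + P (F (y t)) + Q (F (y (t - τ₁)))
        + R (∫ s in (t - τ₂)..t, F (y s)) + I₀
        - K (y t - x (t - β))) t)
    (hβ : 0 ≤ β) {u : ℝ} (hu : t₀ + β ≤ u) :
    HasDerivAt (fun t => y t - x (t - β))
      ((-(A + K)) (y u - x (u - β))
        + (P (F (y u) - F (x (u - β))) + Q (F (y (u - τ₁)) - F (x (u - τ₁ - β)))
          + R (∫ s in (u - τ₂)..u, F (y s) - F (x (s - β))))) u := by
  have hx_lag := (hx_ode (u - β) (by linarith)).comp_sub_const u β
  have hlag_integral : ∫ s in (u - β - τ₂)..(u - β), F (x s)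
      = ∫ s in (u - τ₂)..u, F (x (s - β)) := by
    rw [intervalIntegral.integral_comp_sub_right (fun s => F (x s)) β, sub_right_comm]
  have hsplit_integral : ∫ s in (u - τ₂)..u, F (y s) - F (x (s - β))
      = (∫ s in (u - τ₂)..u, F (y s)) - ∫ s in (u - τ₂)..u, F (x (s - β)) :=
    intervalIntegral.integral_sub ((hF.comp hy).intervalIntegrable _ _)
      ((hF.comp (hx.comp (continuous_sub_right β))).intervalIntegrable _ _)
  convert (hy_ode u (by linarith)).sub hx_lag using 1
  · rfl
  rw [hsplit_integral, hlag_integral, sub_right_comm u β τ₁]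
  simp only [neg_apply, add_apply, map_sub]
  abel

theorem upperRightDiniLE_norm_lag_error {LF Λ : ℝ} (hF : ∀ u v, ‖F u - F v‖ ≤ LF * ‖u - v‖)
    (hLF : 0 ≤ LF) (hx : Continuous x) (hy : Continuous y)
    (hx_ode : ∀ t, t₀ ≤ t → HasDerivAt x
      (-(A (x t)) + P (F (x t)) + Q (F (x (t - τ₁)))
        + R (∫ s in (t - τ₂)..t, F (x s)) + I₀) t)
    (hy_ode : ∀ t, t₀ ≤ t → HasDerivAt y
      (-(A (y t)) + P (F (y t)) + Q (F (y (t - τ₁)))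
        + R (∫ s in (t - τ₂)..t, F (y s)) + I₀
        - K (y t - x (t - β))) t)
    (hτ₁ : 0 ≤ τ₁) (hτ₂ : 0 ≤ τ₂) (hβ : 0 ≤ β)
    (hΛ : Tendsto (fun s : ℝ => (‖(1 : E →L[ℝ] E) + s • (-(A + K))‖ - 1) / s) (𝓝[>] 0) (𝓝 Λ))
    {u M : ℝ} (hu : t₀ + β ≤ u) (hM : ∀ s ∈ Icc (u - max τ₁ τ₂) u, ‖y s - x (s - β)‖ ≤ M) :
    UpperRightDiniLE (fun t => ‖y t - x (t - β)‖) u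
      (-(-Λ - ‖P‖ * LF) * ‖y u - x (u - β)‖ + LF * (‖Q‖ + max τ₁ τ₂ * ‖R‖) * M) := by
  have hF_cont : Continuous F :=
    (LipschitzWith.of_dist_le_mul (K := ⟨LF, hLF⟩) fun u v => by
      rw [dist_eq_norm, dist_eq_norm]; exact hF u v).continuous
  have hdelay := norm_delay_terms_le P Q R hτ₁ hτ₂ (u := u) (N := LF * M)
    fun s hs => (hF _ _).trans (mul_le_mul_of_nonneg_left (hM s hs) hLF)
  have hcurrent : ‖P‖ * ‖F (y u) - F (x (u - β))‖ ≤ ‖P‖ * (LF * ‖y u - x (u - β)‖) := by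
    gcongr
    exact hF _ _
  refine (upperRightDiniLE_norm_of_hasDerivAt
    (hasDerivAt_lag_error hF_cont hx hy hx_ode hy_ode hβ hu) hΛ).mono ?_
  linarith

end LagSynchronization

theorem exponential_lag_synchronization_continuous_general
    {E : Type*} [NormedAddCommGroup E] [NormedSpace ℝ E]
    (A P Q R K : E →L[ℝ] E) (I₀ : E) (F : E → E) (LF : ℝ)
    (τ₁ τ₂ β t₀ : ℝ) (hτ₁ : 0 < τ₁) (hτ₂ : 0 < τ₂) (hβ : 0 < β)
    (hF : ∀ u v, ‖F u - F v‖ ≤ LF * ‖u - v‖)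
    (x y : ℝ → E) (hx_cont : Continuous x) (hy_cont : Continuous y)
    (hx_ode : ∀ t, t₀ ≤ t → HasDerivAt x
      (-(A (x t)) + P (F (x t)) + Q (F (x (t - τ₁)))
        + R (∫ s in (t - τ₂)..t, F (x s)) + I₀) t)
    (hy_ode : ∀ t, t₀ ≤ t → HasDerivAt y
      (-(A (y t)) + P (F (y t)) + Q (F (y (t - τ₁)))
        + R (∫ s in (t - τ₂)..t, F (y s)) + I₀
        - K (y t - x (t - β))) t)
    (Λ : ℝ)
    (hΛ : Tendsto (fun s : ℝ => (‖(1 : E →L[ℝ] E) + s • (-(A + K))‖ - 1) / s)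
      (nhdsWithin 0 (Set.Ioi 0)) (nhds Λ))
    (hgap : LF * (‖Q‖ + max τ₁ τ₂ * ‖R‖) < -Λ - ‖P‖ * LF)
    (hpos : 0 < LF * (‖Q‖ + max τ₁ τ₂ * ‖R‖)) :
    ∃ C > 0, ∃ lam > 0, ∀ t, t₀ ≤ t →
      ‖y t - x (t - β)‖ ≤ C * Real.exp (-lam * (t - t₀)) := by
  have hLF : 0 ≤ LF := (pos_of_mul_pos_left hpos (by positivity)).le
  have he : Continuous fun t => ‖y t - x (t - β)‖ := by fun_prop
  obtain ⟨C₀, hC₀⟩ := isCompact_Icc.exists_bound_of_continuousOn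
    (s := Icc (t₀ - max τ₁ τ₂) (t₀ + β)) he.continuousOn
  set C := max C₀ 1
  have hhist : ∀ s ∈ Icc (t₀ - max τ₁ τ₂) (t₀ + β), ‖y s - x (s - β)‖ ≤ C := fun s hs => by
    simpa only [norm_norm] using (hC₀ s hs).trans (le_max_left C₀ 1)
  obtain ⟨lam, hlam, hdecay⟩ := halanay_inequality he (T := t₀ + β) (by positivity) hgap
    (by positivity) (fun u hu M hM => upperRightDiniLE_norm_lag_error hF hLF hx_cont hy_cont
      hx_ode hy_ode hτ₁.le hτ₂.le hβ.le hΛ hu hM)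
    (fun s hs => hhist s ⟨by linarith [hs.1], hs.2⟩)
  refine ⟨C * exp (lam * β), by positivity, lam, hlam, fun t ht => ?_⟩
  rw [mul_assoc, ← exp_add]
  rcases le_or_gt (t₀ + β) t with h | h
  · calc _ ≤ C * exp (-lam * (t - (t₀ + β))) := hdecay t h
      _ = _ := by ring_nf
  · calc _ ≤ C := hhist t ⟨by linarith [le_max_left τ₁ τ₂], h.le⟩
      _ ≤ _ := le_mul_of_one_le_right (by positivity) (one_le_exp (by nlinarith))

/-- Continuous-time exponential lag synchronization (simplified linear case):
if the drive system `x' = −Ax + P F(x(t)) + Q F(x(t−τ₁)) + R ∫_{t−τ₂}^t F(x(s)) ds + I₀`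
and the response system (same right-hand side in `y` plus the feedback control
`u = −K(y(t) − x(t−β))`) have solutions `x, y`, `F` is `L_F`-Lipschitz, and the
matrix measure `Λ = Λ_p(−(A+K))` satisfies
`−Λ − ‖P‖ L_F > L_F(‖Q‖ + τ‖R‖) > 0` with `τ = max(τ₁, τ₂)`, then the systems
are exponentially lag synchronized: there exist `C > 0`, `λ > 0` with
`‖y(t) − x(t−β)‖ ≤ C·exp(−λ(t−t₀))` for all `t ≥ t₀`. -/
theorem exponential_lag_synchronization_continuous
    {E : Type*} [NormedAddCommGroup E] [NormedSpace ℝ E] [CompleteSpace E] [Nontrivial E]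
    (A P Q R K : E →L[ℝ] E) (I₀ : E) (F : E → E) (LF : ℝ)
    (τ₁ τ₂ β t₀ : ℝ) (hτ₁ : 0 < τ₁) (hτ₂ : 0 < τ₂) (hβ : 0 < β)
    (hF : ∀ u v, ‖F u - F v‖ ≤ LF * ‖u - v‖)
    (x y : ℝ → E) (hx_cont : Continuous x) (hy_cont : Continuous y)
    (hx_ode : ∀ t, t₀ ≤ t → HasDerivAt x
      (-(A (x t)) + P (F (x t)) + Q (F (x (t - τ₁)))
        + R (∫ s in (t - τ₂)..t, F (x s)) + I₀) t)
    (hy_ode : ∀ t, t₀ ≤ t → HasDerivAt y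
      (-(A (y t)) + P (F (y t)) + Q (F (y (t - τ₁)))
        + R (∫ s in (t - τ₂)..t, F (y s)) + I₀
        - K (y t - x (t - β))) t)
    (Λ : ℝ)
    (hΛ : Tendsto (fun s : ℝ => (‖(1 : E →L[ℝ] E) + s • (-(A + K))‖ - 1) / s)
      (nhdsWithin 0 (Set.Ioi 0)) (nhds Λ))
    (hgap : LF * (‖Q‖ + max τ₁ τ₂ * ‖R‖) < -Λ - ‖P‖ * LF)
    (hpos : 0 < LF * (‖Q‖ + max τ₁ τ₂ * ‖R‖)) :
    ∃ C > 0, ∃ lam > 0, ∀ t, t₀ ≤ t →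
      ‖y t - x (t - β)‖ ≤ C * Real.exp (-lam * (t - t₀)) :=
  exponential_lag_synchronization_continuous_general A P Q R K I₀ F LF τ₁ τ₂ β t₀ hτ₁ hτ₂ hβ hF x y
    hx_cont hy_cont hx_ode hy_ode Λ hΛ hgap hpos
end
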